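/- For the n-site transverse field Ising chain, define k = span{X̂_iŶ_j, Ŷ_iX̂_j : 1 ≤ i < j ≤ n} where Â_iB̂_j := A_i Z_{i+1}⋯Z_{j-1} B_j, and m = span{Z_k, X̂_iX̂_j, Ŷ_iŶ_j}. Then g = k ⊕ m satisfies the Cartan commutation relations [k,k] ⊆ k, [m,m] ⊆ k, [k,m] ⊆ m, and h = span{Z_1,...,Z_n} is an Abelian subalgebra of m. -/

import Mathlib

open Matrix

noncomputable def pauli : Fin 4 → Matrix (Fin 2) (Fin 2) ℂ
  | 0 => 1
  | 1 => !![0, 1; 1, 0]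
  | 2 => !![0, -Complex.I; Complex.I, 0]
  | 3 => !![1, 0; 0, -1]

noncomputable def PauliString (n : ℕ) (f : Fin n → Fin 4) :
    Matrix (Fin n → Fin 2) (Fin n → Fin 2) ℂ :=
  fun v w => ∏ i, pauli (f i) (v i) (w i)

/-- The Jordan–Wigner-type word for `Â_i B̂_j = A_i Z_{i+1} ⋯ Z_{j-1} B_j`:
letter `a` at site `i`, letter `b` at site `j`, `Z` (= `3`) strictly between,
identity elsewhere.  (Letters: `1 = X`, `2 = Y`, `3 = Z`.) -/
def wstr (n : ℕ) (i j : Fin n) (a b : Fin 4) : Fin n → Fin 4 :=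
  fun l => if l = i then a else if l = j then b else
    if i < l ∧ l < j then 3 else 0

/-- The word for the single-site operator `Z_k`. -/
def zstr (n : ℕ) (k : Fin n) : Fin n → Fin 4 :=
  fun l => if l = k then 3 else 0

def pmul : Fin 4 → Fin 4 → Fin 4
  | 0, b => b | 1, 0 => 1 | 1, 1 => 0 | 1, 2 => 3 | 1, 3 => 2
  | 2, 0 => 2 | 2, 1 => 3 | 2, 2 => 0 | 2, 3 => 1
  | 3, 0 => 3 | 3, 1 => 2 | 3, 2 => 1 | 3, 3 => 0
noncomputable def phase : Fin 4 → Fin 4 → ℂ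
  | 1, 2 => Complex.I | 1, 3 => -Complex.I
  | 2, 1 => -Complex.I | 2, 3 => Complex.I
  | 3, 1 => Complex.I | 3, 2 => -Complex.I
  | _, _ => 1
noncomputable def eps : Fin 4 → Fin 4 → ℂ
  | 1, 2 => -1 | 1, 3 => -1 | 2, 1 => -1 | 2, 3 => -1 | 3, 1 => -1 | 3, 2 => -1
  | _, _ => 1
lemma pauli_mul (a b : Fin 4) : pauli a * pauli b = phase a b • pauli (pmul a b) := by
  fin_cases a <;> fin_cases b <;>
    · ext v w
      fin_cases v <;> fin_cases w <;>
        simp [pauli, pmul, phase, Matrix.mul_apply, Fin.sum_univ_two, Matrix.one_apply,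
          Complex.ext_iff]
lemma eps_spec (a b : Fin 4) : phase b a = eps a b * phase a b := by
  fin_cases a <;> fin_cases b <;> simp [phase, eps]
lemma pmul_comm' (a b : Fin 4) : pmul b a = pmul a b := by
  fin_cases a <;> fin_cases b <;> rfl
lemma PauliString_mul (n : ℕ) (f g : Fin n → Fin 4) :
    PauliString n f * PauliString n g
      = (∏ i, phase (f i) (g i)) • PauliString n (fun i => pmul (f i) (g i)) := by
  ext v w
  simp only [Matrix.mul_apply, PauliString, Matrix.smul_apply, smul_eq_mul]
  calc ∑ u : Fin n → Fin 2, (∏ i, pauli (f i) (v i) (u i)) * ∏ i, pauli (g i) (u i) (w i)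
      = ∑ u : Fin n → Fin 2,
          ∏ i, (pauli (f i) (v i) (u i) * pauli (g i) (u i) (w i)) :=
        Finset.sum_congr rfl fun u _ => (Finset.prod_mul_distrib).symm
    _ = ∏ i, ∑ j : Fin 2, pauli (f i) (v i) j * pauli (g i) j (w i) :=
        (Fintype.prod_sum (fun i j => pauli (f i) (v i) j * pauli (g i) j (w i))).symm
    _ = ∏ i, (phase (f i) (g i) * pauli (pmul (f i) (g i)) (v i) (w i)) := by
        refine Finset.prod_congr rfl fun i _ => ?_
        have h := congrArg (fun M : Matrix (Fin 2) (Fin 2) ℂ => M (v i) (w i))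
          (pauli_mul (f i) (g i))
        simpa [Matrix.mul_apply] using h
    _ = (∏ i, phase (f i) (g i)) * ∏ i, pauli (pmul (f i) (g i)) (v i) (w i) :=
        Finset.prod_mul_distrib
lemma bracket_PS (n : ℕ) (f g : Fin n → Fin 4) :
    ⁅PauliString n f, PauliString n g⁆ =
      ((1 - ∏ i, eps (f i) (g i)) * ∏ i, phase (f i) (g i)) •
        PauliString n (fun i => pmul (f i) (g i)) := by
  rw [Ring.lie_def, PauliString_mul, PauliString_mul]
  have h1 : (fun i => pmul (g i) (f i)) = fun i => pmul (f i) (g i) :=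
    funext fun i => pmul_comm' _ _
  rw [h1]
  have h2 : ∏ i, phase (g i) (f i) = (∏ i, eps (f i) (g i)) * ∏ i, phase (f i) (g i) := by
    rw [← Finset.prod_mul_distrib]; exact Finset.prod_congr rfl fun i _ => eps_spec _ _
  rw [h2, ← sub_smul]
  congr 1
  ring
lemma bracket_PS_eq_zero (n : ℕ) {f g : Fin n → Fin 4}
    (h : ∏ i, eps (f i) (g i) = 1) : ⁅PauliString n f, PauliString n g⁆ = 0 := by
  rw [bracket_PS, h]; simp
lemma bracket_PS_mem (n : ℕ) {f g : Fin n → Fin 4}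
    {U : Submodule ℂ (Matrix (Fin n → Fin 2) (Fin n → Fin 2) ℂ)}
    (h : PauliString n (fun i => pmul (f i) (g i)) ∈ U) :
    ⁅PauliString n f, PauliString n g⁆ ∈ U := by
  rw [bracket_PS]; exact U.smul_mem _ h
def py : Fin 4 → ℕ := fun a => if a = 2 then 1 else 0
noncomputable def tset (n : ℕ) (r : ℕ) : Set (Matrix (Fin n → Fin 2) (Fin n → Fin 2) ℂ) :=
  {P | ∃ m : Fin n, r = 1 ∧ P = PauliString n (zstr n m)} ∪
  {P | ∃ p q : Fin n, ∃ x y : Fin 4, p < q ∧ (x = 1 ∨ x = 2) ∧ (y = 1 ∨ y = 2) ∧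
       (py x + py y + 1) % 2 = r ∧ P = PauliString n (wstr n p q x y)}
lemma eps_one {x y : Fin 4} (h : x = 0 ∨ y = 0 ∨ x = y) : eps x y = 1 := by
  fin_cases x <;> fin_cases y <;> simp_all [eps]
lemma eps_letters_ne {a c : Fin 4} (ha : a = 1 ∨ a = 2) (hc : c = 1 ∨ c = 2)
    (h : a ≠ c) : eps a c = -1 := by
  rcases ha with rfl | rfl <;> rcases hc with rfl | rfl <;> simp_all [eps]
lemma eps_lz {a : Fin 4} (ha : a = 1 ∨ a = 2) : eps a 3 = -1 := by
  rcases ha with rfl | rfl <;> simp [eps]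
lemma eps_zl {a : Fin 4} (ha : a = 1 ∨ a = 2) : eps 3 a = -1 := by
  rcases ha with rfl | rfl <;> simp [eps]
lemma prod_eps_one_all {n : ℕ} {f g : Fin n → Fin 4}
    (h : ∀ m, f m = 0 ∨ g m = 0 ∨ f m = g m) : ∏ i, eps (f i) (g i) = 1 :=
  Finset.prod_eq_one fun i _ => eps_one (h i)
lemma prod_eps_one_pair {n : ℕ} {f g : Fin n → Fin 4} {s t : Fin n} (hst : s ≠ t)
    (hs : eps (f s) (g s) = -1) (ht : eps (f t) (g t) = -1)
    (h : ∀ m, m ≠ s → m ≠ t → f m = 0 ∨ g m = 0 ∨ f m = g m) :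
    ∏ i, eps (f i) (g i) = 1 := by
  have h1 : ∏ i, eps (f i) (g i) = ∏ i ∈ ({s, t} : Finset (Fin n)), eps (f i) (g i) := by
    refine (Finset.prod_subset (Finset.subset_univ _) fun x _ hx => ?_).symm
    simp only [Finset.mem_insert, Finset.mem_singleton] at hx
    push_neg at hx
    exact eps_one (h x hx.1 hx.2)
  rw [h1, Finset.prod_pair hst, hs, ht]; norm_num
lemma wstr_fst {n : ℕ} {i j : Fin n} {a b : Fin 4} : wstr n i j a b i = a := by simp [wstr]
lemma wstr_snd {n : ℕ} {i j : Fin n} {a b : Fin 4} (h : j ≠ i) : wstr n i j a b j = b := by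
  simp [wstr, h]
lemma wstr_mid {n : ℕ} {i j m : Fin n} {a b : Fin 4} (h1 : i < m) (h2 : m < j) :
    wstr n i j a b m = 3 := by
  have e1 : m ≠ i := ne_of_gt h1
  have e2 : m ≠ j := ne_of_lt h2
  simp [wstr, e1, e2, h1, h2]
lemma wstr_out {n : ℕ} {i j m : Fin n} {a b : Fin 4} (h1 : m ≠ i) (h2 : m ≠ j)
    (h3 : ¬(i < m ∧ m < j)) : wstr n i j a b m = 0 := by
  simp [wstr, h1, h2, h3]
lemma zstr_self {n : ℕ} {k : Fin n} : zstr n k k = 3 := by simp [zstr]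
lemma zstr_ne {n : ℕ} {k m : Fin n} (h : m ≠ k) : zstr n k m = 0 := by simp [zstr, h]
lemma pmul_zero_left (x : Fin 4) : pmul 0 x = x := rfl
lemma key_zz (n : ℕ) (e e' : Fin n) :
    ⁅PauliString n (zstr n e), PauliString n (zstr n e')⁆ = 0 := by
  refine bracket_PS_eq_zero n (prod_eps_one_all fun m => ?_)
  by_cases hm : m = e
  · subst hm
    by_cases hm' : m = e'
    · subst hm'; right; right; rfl
    · right; left; exact zstr_ne hm'
  · left; exact zstr_ne hm
lemma key_z (n : ℕ) (e i j : Fin n) (a b : Fin 4) (hij : i < j)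
    (ha : a = 1 ∨ a = 2) (hb : b = 1 ∨ b = 2)
    (r : ℕ) (hr : (py a + py b) % 2 = r) :
    ⁅PauliString n (zstr n e), PauliString n (wstr n i j a b)⁆ ∈
      Submodule.span ℂ (tset n r) := by
  subst hr
  have hji : j ≠ i := ne_of_gt hij
  by_cases hei : e = i
  · subst hei
    refine bracket_PS_mem n ?_
    have hw : (fun m => pmul (zstr n e m) (wstr n e j a b m)) = wstr n e j (pmul 3 a) b := by
      funext m
      by_cases hm : m = e
      · subst hm; rw [zstr_self, wstr_fst, wstr_fst]
      · rw [zstr_ne hm, pmul_zero_left]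
        simp [wstr, hm]
    rw [hw]
    refine Submodule.subset_span (Or.inr ⟨e, j, pmul 3 a, b, hij, ?_, hb, ?_, rfl⟩)
    · rcases ha with rfl | rfl
      · right; rfl
      · left; rfl
    · rcases ha with rfl | rfl <;> rcases hb with rfl | rfl <;> rfl
  · by_cases hej : e = j
    · subst hej
      refine bracket_PS_mem n ?_
      have hw : (fun m => pmul (zstr n e m) (wstr n i e a b m)) = wstr n i e a (pmul 3 b) := by
        funext m
        by_cases hm : m = e
        · subst hm
          rw [zstr_self, wstr_snd hji, wstr_snd hji]
        · rw [zstr_ne hm, pmul_zero_left]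
          simp [wstr, hm]
      rw [hw]
      refine Submodule.subset_span (Or.inr ⟨i, e, a, pmul 3 b, hij, ha, ?_, ?_, rfl⟩)
      · rcases hb with rfl | rfl
        · right; rfl
        · left; rfl
      · rcases ha with rfl | rfl <;> rcases hb with rfl | rfl <;> rfl
    · have h0 : ∏ m, eps (zstr n e m) (wstr n i j a b m) = 1 := by
        refine prod_eps_one_all fun m => ?_
        by_cases hm : m = e
        · subst hm
          rcases Decidable.em (i < m ∧ m < j) with hmid | hmid
          · right; right; rw [zstr_self, wstr_mid hmid.1 hmid.2]
          · right; left; exact wstr_out hei hej hmid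
        · left; exact zstr_ne hm
      rw [bracket_PS_eq_zero n h0]
      exact Submodule.zero_mem _
lemma pmul_zero_right (x : Fin 4) : pmul x 0 = x := by fin_cases x <;> rfl
lemma pmul_self (x : Fin 4) : pmul x x = 0 := by fin_cases x <;> rfl
lemma pmul_ne {a c : Fin 4} (ha : a = 1 ∨ a = 2) (hc : c = 1 ∨ c = 2) (h : a ≠ c) :
    pmul a c = 3 := by
  rcases ha with rfl | rfl <;> rcases hc with rfl | rfl <;> first | exact absurd rfl h | rfl
lemma pmul_z_letter {b : Fin 4} (hb : b = 1 ∨ b = 2) : pmul b 3 = 1 ∨ pmul b 3 = 2 := by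
  rcases hb with rfl | rfl
  · right; rfl
  · left; rfl
lemma pmul_z_letter' {b : Fin 4} (hb : b = 1 ∨ b = 2) : pmul 3 b = 1 ∨ pmul 3 b = 2 := by
  rcases hb with rfl | rfl
  · right; rfl
  · left; rfl
set_option maxHeartbeats 2000000 in
lemma key_aux (n : ℕ) (i j k l : Fin n) (a b c d : Fin 4)
    (hij : i < j) (hkl : k < l)
    (ha : a = 1 ∨ a = 2) (hb : b = 1 ∨ b = 2) (hc : c = 1 ∨ c = 2) (hd : d = 1 ∨ d = 2)
    (hik : i < k ∨ (i = k ∧ j ≤ l)) :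
    ⁅PauliString n (wstr n i j a b), PauliString n (wstr n k l c d)⁆ ∈
      Submodule.span ℂ (tset n ((py a + py b + py c + py d) % 2)) := by
  have hji : j ≠ i := ne_of_gt hij
  have hlk : l ≠ k := ne_of_gt hkl
  rcases hik with hik | ⟨rfl, hjl⟩
  · -- i < k
    rcases lt_trichotomy j k with hjk | rfl | hkj
    · -- disjoint: j < k, zero
      have h0 : ∏ m, eps (wstr n i j a b m) (wstr n k l c d m) = 1 := by
        refine prod_eps_one_all fun m => ?_
        simp only [wstr]
        split_ifs <;> omega
      rw [bracket_PS_eq_zero n h0]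
      exact Submodule.zero_mem _
    · -- touching: j = k
      by_cases hbc : b = c
      · have h0 : ∏ m, eps (wstr n i j a b m) (wstr n j l c d m) = 1 := by
          refine prod_eps_one_all fun m => ?_
          simp only [wstr]
          split_ifs <;> omega
        rw [bracket_PS_eq_zero n h0]
        exact Submodule.zero_mem _
      · refine bracket_PS_mem n ?_
        have hw : (fun m => pmul (wstr n i j a b m) (wstr n j l c d m)) = wstr n i l a d := by
          funext m
          simp only [wstr]
          split_ifs <;>
            first
              | rfl
              | exact pmul_zero_right _
              | exact pmul_self _
              | exact pmul_ne hb hc hbc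
              | omega
        rw [hw]
        refine Submodule.subset_span (Or.inr ⟨i, l, a, d, hij.trans hkl, ha, hd, ?_, rfl⟩)
        rcases ha with rfl | rfl <;> rcases hb with rfl | rfl <;> rcases hc with rfl | rfl <;>
          rcases hd with rfl | rfl <;> first | exact absurd rfl hbc | decide
    · -- k < j : overlap
      rcases lt_trichotomy l j with hlj | rfl | hjl'
      · -- nested: i < k < l < j, zero
        have h0 : ∏ m, eps (wstr n i j a b m) (wstr n k l c d m) = 1 := by
          refine prod_eps_one_pair hkl.ne ?_ ?_ fun m hm1 hm2 => ?_
          · rw [wstr_fst, wstr_mid hik hkj]; exact eps_zl hc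
          · rw [wstr_snd hlk, wstr_mid (hik.trans hkl) hlj]; exact eps_zl hd
          · simp only [wstr]
            split_ifs <;> omega
        rw [bracket_PS_eq_zero n h0]
        exact Submodule.zero_mem _
      · -- shared right endpoint: i < k < j = l
        by_cases hbd : b = d
        · subst hbd
          refine bracket_PS_mem n ?_
          have hw : (fun m => pmul (wstr n i l a b m) (wstr n k l c b m))
              = wstr n i k a (pmul 3 c) := by
            funext m
            simp only [wstr]
            split_ifs <;>
              first
                | rfl
                | exact pmul_zero_right _
                | exact pmul_self _
                | omega
          rw [hw]
          refine Submodule.subset_span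
            (Or.inr ⟨i, k, a, pmul 3 c, hik, ha, pmul_z_letter' hc, ?_, rfl⟩)
          rcases ha with rfl | rfl <;> rcases hb with rfl | rfl <;>
            rcases hc with rfl | rfl <;> decide
        · have h0 : ∏ m, eps (wstr n i l a b m) (wstr n k l c d m) = 1 := by
            refine prod_eps_one_pair (ne_of_lt hkj) ?_ ?_ fun m hm1 hm2 => ?_
            · rw [wstr_mid hik hkj, wstr_fst]; exact eps_zl hc
            · rw [wstr_snd hji, wstr_snd hlk]; exact eps_letters_ne hb hd hbd
            · simp only [wstr]
              split_ifs <;> omega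
          rw [bracket_PS_eq_zero n h0]
          exact Submodule.zero_mem _
      · -- staggered: i < k < j < l, zero
        have h0 : ∏ m, eps (wstr n i j a b m) (wstr n k l c d m) = 1 := by
          refine prod_eps_one_pair (ne_of_lt hkj) ?_ ?_ fun m hm1 hm2 => ?_
          · rw [wstr_mid hik hkj, wstr_fst]; exact eps_zl hc
          · rw [wstr_snd hji, wstr_mid hkj hjl']; exact eps_lz hb
          · simp only [wstr]
            split_ifs <;> omega
        rw [bracket_PS_eq_zero n h0]
        exact Submodule.zero_mem _
  · -- i = k
    rcases eq_or_lt_of_le hjl with rfl | hjl'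
    · -- identical intervals
      by_cases hac : a = c
      · subst hac
        by_cases hbd : b = d
        · subst hbd
          rw [Ring.lie_def, sub_self]
          exact Submodule.zero_mem _
        · refine bracket_PS_mem n ?_
          have hw : (fun m => pmul (wstr n i j a b m) (wstr n i j a d m)) = zstr n j := by
            funext m
            simp only [wstr, zstr]
            split_ifs <;>
              first
                | rfl
                | exact pmul_self _
                | exact pmul_ne hb hd hbd
                | omega
          rw [hw]
          refine Submodule.subset_span (Or.inl ⟨j, ?_, rfl⟩)
          rcases ha with rfl | rfl <;> rcases hb with rfl | rfl <;> rcases hd with rfl | rfl <;>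
            first | exact absurd rfl hbd | decide
      · by_cases hbd : b = d
        · subst hbd
          refine bracket_PS_mem n ?_
          have hw : (fun m => pmul (wstr n i j a b m) (wstr n i j c b m)) = zstr n i := by
            funext m
            simp only [wstr, zstr]
            split_ifs <;>
              first
                | rfl
                | exact pmul_self _
                | exact pmul_ne ha hc hac
                | omega
          rw [hw]
          refine Submodule.subset_span (Or.inl ⟨i, ?_, rfl⟩)
          rcases ha with rfl | rfl <;> rcases hb with rfl | rfl <;> rcases hc with rfl | rfl <;>
            first | exact absurd rfl hac | decide
        · have h0 : ∏ m, eps (wstr n i j a b m) (wstr n i j c d m) = 1 := by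
            refine prod_eps_one_pair hij.ne ?_ ?_ fun m hm1 hm2 => ?_
            · rw [wstr_fst, wstr_fst]; exact eps_letters_ne ha hc hac
            · rw [wstr_snd hji, wstr_snd hji]; exact eps_letters_ne hb hd hbd
            · simp only [wstr]
              split_ifs <;> omega
          rw [bracket_PS_eq_zero n h0]
          exact Submodule.zero_mem _
    · -- i = k, j < l : shared left endpoint
      by_cases hac : a = c
      · subst hac
        refine bracket_PS_mem n ?_
        have hw : (fun m => pmul (wstr n i j a b m) (wstr n i l a d m))
            = wstr n j l (pmul b 3) d := by
          funext m
          simp only [wstr]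
          split_ifs <;>
            first
              | rfl
              | exact pmul_zero_right _
              | exact pmul_self _
              | omega
        rw [hw]
        refine Submodule.subset_span
          (Or.inr ⟨j, l, pmul b 3, d, hjl', pmul_z_letter hb, hd, ?_, rfl⟩)
        rcases ha with rfl | rfl <;> rcases hb with rfl | rfl <;> rcases hd with rfl | rfl <;>
          decide
      · have h0 : ∏ m, eps (wstr n i j a b m) (wstr n i l c d m) = 1 := by
          refine prod_eps_one_pair hij.ne ?_ ?_ fun m hm1 hm2 => ?_
          · rw [wstr_fst, wstr_fst]; exact eps_letters_ne ha hc hac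
          · rw [wstr_snd hji, wstr_mid hij hjl']; exact eps_lz hb
          · simp only [wstr]
            split_ifs <;> omega
        rw [bracket_PS_eq_zero n h0]
        exact Submodule.zero_mem _
lemma key (n : ℕ) (i j k l : Fin n) (a b c d : Fin 4)
    (hij : i < j) (hkl : k < l)
    (ha : a = 1 ∨ a = 2) (hb : b = 1 ∨ b = 2) (hc : c = 1 ∨ c = 2) (hd : d = 1 ∨ d = 2)
    (r : ℕ) (hr : (py a + py b + py c + py d) % 2 = r) :
    ⁅PauliString n (wstr n i j a b), PauliString n (wstr n k l c d)⁆ ∈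
      Submodule.span ℂ (tset n r) := by
  subst hr
  rcases lt_trichotomy i k with h | h | h
  · exact key_aux n i j k l a b c d hij hkl ha hb hc hd (Or.inl h)
  · rcases le_or_gt j l with h2 | h2
    · exact key_aux n i j k l a b c d hij hkl ha hb hc hd (Or.inr ⟨h, h2⟩)
    · have hmem := key_aux n k l i j c d a b hkl hij hc hd ha hb (Or.inr ⟨h.symm, h2.le⟩)
      have hre : (py c + py d + py a + py b) % 2 = (py a + py b + py c + py d) % 2 := by omega
      rw [hre] at hmem
      rw [Ring.lie_def, ← neg_sub, ← Ring.lie_def]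
      exact Submodule.neg_mem _ hmem
  · have hmem := key_aux n k l i j c d a b hkl hij hc hd ha hb (Or.inl h)
    have hre : (py c + py d + py a + py b) % 2 = (py a + py b + py c + py d) % 2 := by omega
    rw [hre] at hmem
    rw [Ring.lie_def, ← neg_sub, ← Ring.lie_def]
    exact Submodule.neg_mem _ hmem
lemma tset_zero_sub (n : ℕ) :
    tset n 0 ⊆ {P | ∃ i j : Fin n, i < j ∧
      (P = PauliString n (wstr n i j 1 2) ∨ P = PauliString n (wstr n i j 2 1))} := by
  rintro P (⟨m, hm, _⟩ | ⟨p, q, x, y, hpq, hx, hy, hpar, rfl⟩)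
  · omega
  · rcases hx with rfl | rfl <;> rcases hy with rfl | rfl
    · exact absurd hpar (by decide)
    · exact ⟨p, q, hpq, Or.inl rfl⟩
    · exact ⟨p, q, hpq, Or.inr rfl⟩
    · exact absurd hpar (by decide)
lemma tset_one_sub (n : ℕ) :
    tset n 1 ⊆ ({P | ∃ k : Fin n, P = PauliString n (zstr n k)} ∪
      {P | ∃ i j : Fin n, i < j ∧
        (P = PauliString n (wstr n i j 1 1) ∨ P = PauliString n (wstr n i j 2 2))}) := by
  rintro P (⟨m, _, rfl⟩ | ⟨p, q, x, y, hpq, hx, hy, hpar, rfl⟩)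
  · exact Or.inl ⟨m, rfl⟩
  · rcases hx with rfl | rfl <;> rcases hy with rfl | rfl
    · exact Or.inr ⟨p, q, hpq, Or.inl rfl⟩
    · exact absurd hpar (by decide)
    · exact absurd hpar (by decide)
    · exact Or.inr ⟨p, q, hpq, Or.inr rfl⟩
lemma span_bracket {n : ℕ} {S T : Set (Matrix (Fin n → Fin 2) (Fin n → Fin 2) ℂ)}
    {U : Submodule ℂ (Matrix (Fin n → Fin 2) (Fin n → Fin 2) ℂ)}
    (h : ∀ x ∈ S, ∀ y ∈ T, ⁅x, y⁆ ∈ U) :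
    ∀ x ∈ Submodule.span ℂ S, ∀ y ∈ Submodule.span ℂ T, ⁅x, y⁆ ∈ U := by
  intro x hx
  induction hx using Submodule.span_induction with
  | mem z hz =>
    intro y hy
    induction hy using Submodule.span_induction with
    | mem w hw => exact h z hz w hw
    | zero => rw [Ring.lie_def, mul_zero, zero_mul, sub_zero]; exact U.zero_mem
    | add u v _ _ hu hv => rw [show ⁅z, u + v⁆ = ⁅z, u⁆ + ⁅z, v⁆ by simp only [Ring.lie_def]; noncomm_ring]; exact U.add_mem hu hv
    | smul c u _ hu => rw [show ⁅z, c • u⁆ = c • ⁅z, u⁆ by simp only [Ring.lie_def, mul_smul_comm, smul_mul_assoc, smul_sub]]; exact U.smul_mem c hu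
  | zero => intro y hy; rw [Ring.lie_def, mul_zero, zero_mul, sub_zero]; exact U.zero_mem
  | add u v _ _ hu hv => intro y hy; rw [show ⁅u + v, y⁆ = ⁅u, y⁆ + ⁅v, y⁆ by simp only [Ring.lie_def]; noncomm_ring]; exact U.add_mem (hu y hy) (hv y hy)
  | smul c u _ hu => intro y hy; rw [show ⁅c • u, y⁆ = c • ⁅u, y⁆ by simp only [Ring.lie_def, mul_smul_comm, smul_mul_assoc, smul_sub]]; exact U.smul_mem c (hu y hy)

/-- **TFIM Cartan decomposition** (Eq. 14 of the paper).  With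
`k = span{X̂ᵢŶⱼ, ŶᵢX̂ⱼ : i < j}`, `m = span{Z_k, X̂ᵢX̂ⱼ, ŶᵢŶⱼ}`, and
`h = span{Z_k}`, the Cartan relations `[k,k] ⊆ k`, `[m,m] ⊆ k`, `[k,m] ⊆ m`
hold, and `h` is an Abelian subalgebra of `m`. -/
theorem tfim_cartan_decomposition (n : ℕ) :
    ∀ kk mm hh : Submodule ℂ (Matrix (Fin n → Fin 2) (Fin n → Fin 2) ℂ),
      kk = Submodule.span ℂ {P | ∃ i j : Fin n, i < j ∧
        (P = PauliString n (wstr n i j 1 2) ∨ P = PauliString n (wstr n i j 2 1))} →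
      mm = Submodule.span ℂ ({P | ∃ k : Fin n, P = PauliString n (zstr n k)} ∪
        {P | ∃ i j : Fin n, i < j ∧
          (P = PauliString n (wstr n i j 1 1) ∨ P = PauliString n (wstr n i j 2 2))}) →
      hh = Submodule.span ℂ {P | ∃ k : Fin n, P = PauliString n (zstr n k)} →
      (∀ x ∈ kk, ∀ y ∈ kk, ⁅x, y⁆ ∈ kk) ∧
      (∀ x ∈ mm, ∀ y ∈ mm, ⁅x, y⁆ ∈ kk) ∧
      (∀ x ∈ kk, ∀ y ∈ mm, ⁅x, y⁆ ∈ mm) ∧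
      hh ≤ mm ∧
      (∀ x ∈ hh, ∀ y ∈ hh, ⁅x, y⁆ = 0) := by
  intro kk mm hh hk hm hhh
  subst hk; subst hm; subst hhh
  have sub0 := Submodule.span_mono (R := ℂ) (tset_zero_sub n)
  have sub1 := Submodule.span_mono (R := ℂ) (tset_one_sub n)
  refine ⟨?_, ?_, ?_, Submodule.span_mono Set.subset_union_left, ?_⟩
  · refine span_bracket ?_
    rintro x ⟨i, j, hij, hx⟩ y ⟨k, l, hkl, hy⟩
    rcases hx with rfl | rfl <;> rcases hy with rfl | rfl <;>
      exact sub0 (key n i j k l _ _ _ _ hij hkl (by decide) (by decide) (by decide)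
        (by decide) 0 (by decide))
  · refine span_bracket ?_
    rintro x (⟨e, rfl⟩ | ⟨i, j, hij, hx⟩) y (⟨e', rfl⟩ | ⟨k, l, hkl, hy⟩)
    · rw [key_zz]; exact Submodule.zero_mem _
    · rcases hy with rfl | rfl <;>
        exact sub0 (key_z n e k l _ _ hkl (by decide) (by decide) 0 (by decide))
    · rcases hx with rfl | rfl <;>
        · rw [Ring.lie_def, ← neg_sub, ← Ring.lie_def]
          exact Submodule.neg_mem _
            (sub0 (key_z n e' i j _ _ hij (by decide) (by decide) 0 (by decide)))
    · rcases hx with rfl | rfl <;> rcases hy with rfl | rfl <;>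
        exact sub0 (key n i j k l _ _ _ _ hij hkl (by decide) (by decide) (by decide)
          (by decide) 0 (by decide))
  · refine span_bracket ?_
    rintro x ⟨i, j, hij, hx⟩ y (⟨e, rfl⟩ | ⟨k, l, hkl, hy⟩)
    · rcases hx with rfl | rfl <;>
        · rw [Ring.lie_def, ← neg_sub, ← Ring.lie_def]
          exact Submodule.neg_mem _
            (sub1 (key_z n e i j _ _ hij (by decide) (by decide) 1 (by decide)))
    · rcases hx with rfl | rfl <;> rcases hy with rfl | rfl <;>
        exact sub1 (key n i j k l _ _ _ _ hij hkl (by decide) (by decide) (by decide)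
          (by decide) 1 (by decide))
  · intro x hx y hy
    have h := span_bracket (U := (⊥ : Submodule ℂ (Matrix (Fin n → Fin 2) (Fin n → Fin 2) ℂ)))
      ?_ x hx y hy
    · simpa using h
    · rintro x' ⟨e, rfl⟩ y' ⟨e', rfl⟩
      rw [Submodule.mem_bot]
      exact key_zz n e e'
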